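/- For every $\xi = (\xi_0,\ldots,\xi_n) \in \mathbb{R}^{n+1}$ and every $v = (v_0,\ldots,v_n)$ with $0 \le v_i \le 1$ for all $i$, the quadratic form satisfies $\xi^T (P - B(v)) \xi \ge (K - 2n\kappa)\,\|\xi\|_2^2$, where $P = K I_{n+1}$ and $B(v)$ is the matrix with entries $B(v)_{ii} = \sum_{j\ne i}(K_{ij}-K)v_j$ and $B(v)_{ij} = -(K_{ij}-K)v_i$ for $i \ne j$. -/

import Mathlib

/-!
Write `ξᵀ (P - B) ξ = K ‖ξ‖² - ξᵀ B ξ`. Every diagonal entry of `B` is at most `nκ` and every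
off-diagonal entry has absolute value at most `κ`, since `0 ≤ v ≤ 1`. By `|x b y| ≤ |b| (x² + y²)/2`
(the Schur test), `ξᵀ B ξ` is then bounded by the largest row sum of these bounds, `nκ + nκ`,
times `‖ξ‖²`.
-/

open Finset Matrix

theorem mul_mul_le_of_abs_le {b c : ℝ} (hb : |b| ≤ c) (x y : ℝ) :
    x * (b * y) ≤ c * (x ^ 2 + y ^ 2) / 2 := by
  obtain ⟨hcb, hbc⟩ := abs_le.mp hb
  nlinarith [mul_nonneg (sub_nonneg.mpr hbc) (sq_nonneg (x + y)),
    mul_nonneg (neg_le_iff_add_nonneg.mp hcb) (sq_nonneg (x - y))]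

theorem abs_mul_le_of_abs_le_of_mem_Icc {a c v : ℝ} (ha : |a| ≤ c) (hv : v ∈ Set.Icc (0 : ℝ) 1) :
    |a * v| ≤ c := by
  rw [abs_mul, abs_of_nonneg hv.1]
  exact (mul_le_of_le_one_right (abs_nonneg a) hv.2).trans ha

section QuadraticForm

variable {ι : Type*} [Fintype ι]

theorem dotProduct_mulVec_le_of_schur_test (A W : Matrix ι ι ℝ) (x : ι → ℝ) {r : ℝ}
    (hA : ∀ i j, x i * (A i j * x j) ≤ W i j * (x i ^ 2 + x j ^ 2) / 2)
    (hrow : ∀ i, ∑ j, W i j ≤ r) (hcol : ∀ j, ∑ i, W i j ≤ r) :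
    x ⬝ᵥ A *ᵥ x ≤ r * ∑ i, x i ^ 2 := by
  have hrow' : ∑ i, ∑ j, W i j * x i ^ 2 ≤ r * ∑ i, x i ^ 2 := by
    simp only [← Finset.sum_mul, Finset.mul_sum]
    exact Finset.sum_le_sum fun i _ => mul_le_mul_of_nonneg_right (hrow i) (sq_nonneg _)
  have hcol' : ∑ i, ∑ j, W i j * x j ^ 2 ≤ r * ∑ j, x j ^ 2 := by
    rw [Finset.sum_comm]
    simp only [← Finset.sum_mul, Finset.mul_sum]
    exact Finset.sum_le_sum fun j _ => mul_le_mul_of_nonneg_right (hcol j) (sq_nonneg _)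
  calc x ⬝ᵥ A *ᵥ x = ∑ i, ∑ j, x i * (A i j * x j) := by
        simp only [dotProduct, mulVec, Finset.mul_sum]
    _ ≤ ∑ i, ∑ j, W i j * (x i ^ 2 + x j ^ 2) / 2 :=
        Finset.sum_le_sum fun i _ => Finset.sum_le_sum fun j _ => hA i j
    _ = (∑ i, ∑ j, W i j * x i ^ 2 + ∑ i, ∑ j, W i j * x j ^ 2) / 2 := by
        simp only [mul_add, add_div, Finset.sum_add_distrib, Finset.sum_div]
    _ ≤ r * ∑ i, x i ^ 2 := by linarith

theorem sum_ite_eq_add_card_sub_one_mul [DecidableEq ι] (i : ι) (d c : ℝ) :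
    ∑ j, (if i = j then d else c) = d + (Fintype.card ι - 1) * c := by
  rw [← Finset.add_sum_erase _ _ (Finset.mem_univ i), if_pos rfl,
    Finset.sum_congr rfl fun j hj => if_neg (Finset.ne_of_mem_erase hj).symm, Finset.sum_const,
    Finset.card_erase_of_mem (Finset.mem_univ i), Finset.card_univ, nsmul_eq_mul,
    Nat.cast_pred (Fintype.card_pos_iff.mpr ⟨i⟩)]

theorem dotProduct_mulVec_le_of_diag_le_of_abs_le (A : Matrix ι ι ℝ) (x : ι → ℝ) {d c : ℝ}
    (hdiag : ∀ i, A i i ≤ d) (hoff : ∀ i j, i ≠ j → |A i j| ≤ c) :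
    x ⬝ᵥ A *ᵥ x ≤ (d + (Fintype.card ι - 1) * c) * ∑ i, x i ^ 2 := by
  classical
  refine dotProduct_mulVec_le_of_schur_test A (fun i j => if i = j then d else c) x ?_
    (fun i => (sum_ite_eq_add_card_sub_one_mul i d c).le) fun j => ?_
  · intro i j
    split_ifs with hij
    · subst hij
      nlinarith [mul_le_mul_of_nonneg_right (hdiag i) (sq_nonneg (x i))]
    · exact mul_mul_le_of_abs_le (hoff i j hij) (x i) (x j)
  · simp_rw [eq_comm (a := _) (b := j)]
    exact (sum_ite_eq_add_card_sub_one_mul j d c).le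

end QuadraticForm

theorem stmt_1_general (n : ℕ) (K : Fin (n + 1) → Fin (n + 1) → ℝ)
    (Kc κ : ℝ)
    (hclose : ∀ i j : Fin (n + 1), i ≠ j → |K i j - Kc| ≤ κ)
    (v ξ : Fin (n + 1) → ℝ) (hv : ∀ i, 0 ≤ v i ∧ v i ≤ 1)
    (B P : Matrix (Fin (n + 1)) (Fin (n + 1)) ℝ)
    (hB : ∀ i j, B i j = if i = j then ∑ k ∈ Finset.univ.erase i, (K i k - Kc) * v k
      else -(K i j - Kc) * v i)
    (hP : P = Kc • (1 : Matrix (Fin (n + 1)) (Fin (n + 1)) ℝ)) :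
    dotProduct ξ ((P - B).mulVec ξ) ≥ (Kc - 2 * n * κ) * ∑ i : Fin (n + 1), ξ i ^ 2 := by
  have hdiag : ∀ i, B i i ≤ n * κ := by
    intro i
    rw [hB, if_pos rfl]
    calc ∑ k ∈ univ.erase i, (K i k - Kc) * v k ≤ ∑ _k ∈ univ.erase i, κ :=
          sum_le_sum fun k hk => (le_abs_self _).trans <| abs_mul_le_of_abs_le_of_mem_Icc
            (hclose i k (ne_of_mem_erase hk).symm) (hv k)
      _ = n * κ := by simp [card_erase_of_mem]
  have hoff : ∀ i j, i ≠ j → |B i j| ≤ κ := by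
    intro i j hij
    rw [hB, if_neg hij, neg_mul, abs_neg]
    exact abs_mul_le_of_abs_le_of_mem_Icc (hclose i j hij) (hv i)
  have hBξ := dotProduct_mulVec_le_of_diag_le_of_abs_le B ξ hdiag hoff
  have hPξ : ξ ⬝ᵥ P *ᵥ ξ = Kc * ∑ i, ξ i ^ 2 := by
    simp [hP, smul_mulVec, dotProduct, sq, Finset.mul_sum, mul_left_comm]
  rw [Fintype.card_fin, Nat.cast_add_one, add_sub_cancel_right] at hBξ
  rw [ge_iff_le, sub_mulVec, dotProduct_sub, hPξ]
  linarith

/-- coercivity of the linearized diffusion matrix: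
`ξᵀ (P - B(v)) ξ ≥ (K - 2nκ) ‖ξ‖₂²` for `v ∈ [0,1]^{n+1}`. -/
theorem stmt_1 (n : ℕ) (hn : 0 < n) (K : Fin (n + 1) → Fin (n + 1) → ℝ)
    (Kc κ : ℝ) (hκ : 0 ≤ κ)
    (hnonneg : ∀ i j : Fin (n + 1), i ≠ j → 0 ≤ K i j)
    (hsym : ∀ i j : Fin (n + 1), K i j = K j i)
    (hclose : ∀ i j : Fin (n + 1), i ≠ j → |K i j - Kc| ≤ κ)
    (v ξ : Fin (n + 1) → ℝ) (hv : ∀ i, 0 ≤ v i ∧ v i ≤ 1)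
    (B P : Matrix (Fin (n + 1)) (Fin (n + 1)) ℝ)
    (hB : ∀ i j, B i j = if i = j then ∑ k ∈ Finset.univ.erase i, (K i k - Kc) * v k
      else -(K i j - Kc) * v i)
    (hP : P = Kc • (1 : Matrix (Fin (n + 1)) (Fin (n + 1)) ℝ)) :
    dotProduct ξ ((P - B).mulVec ξ) ≥ (Kc - 2 * n * κ) * ∑ i : Fin (n + 1), ξ i ^ 2 :=
  stmt_1_general n K Kc κ hclose v ξ hv B P hB hP
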